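/- Let X ∈ ℝ^{n×d} have rank d, and let V be the diagonal matrix scaling only row i by α ≥ 1 (V_{ii} = α, V_{jj} = 1 otherwise). Then ℓ_i(VX) ≥ ℓ_i(X) and ℓ_j(VX) ≤ ℓ_j(X) for all j ≠ i. Conversely, if 0 < α ≤ 1, then ℓ_i(VX) ≤ ℓ_i(X) and ℓ_j(VX) ≥ ℓ_j(X) for all j ≠ i. -/

import Mathlib

open Matrix Module

lemma mul_vecMulVec' {d : ℕ} (M : Matrix (Fin d) (Fin d) ℝ) (u v : Fin d → ℝ) :
    M * vecMulVec u v = vecMulVec (M *ᵥ u) v := by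
  ext a b
  simp [mul_apply, vecMulVec_apply, mulVec, dotProduct, Finset.sum_mul, mul_assoc]

lemma vecMulVec_mul' {d : ℕ} (u v : Fin d → ℝ) (M : Matrix (Fin d) (Fin d) ℝ) :
    vecMulVec u v * M = vecMulVec u (v ᵥ* M) := by
  ext a b
  simp [mul_apply, vecMulVec_apply, vecMul, dotProduct, Finset.mul_sum, mul_assoc]

lemma vecMulVec_mulVec' {d : ℕ} (u v x : Fin d → ℝ) :
    vecMulVec u v *ᵥ x = (v ⬝ᵥ x) • u := by
  ext a
  simp [vecMulVec_apply, mulVec, dotProduct, Finset.mul_sum, mul_assoc, mul_comm, mul_left_comm]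

lemma vecMul_vecMulVec' {d : ℕ} (x u v : Fin d → ℝ) :
    x ᵥ* vecMulVec u v = (x ⬝ᵥ u) • v := by
  ext a
  simp only [vecMulVec_apply, vecMul, dotProduct, Pi.smul_apply, smul_eq_mul,
    Finset.sum_mul]
  exact Finset.sum_congr rfl fun k _ => by ring

lemma vecMulVec_smul' {d : ℕ} (u : Fin d → ℝ) (r : ℝ) (v : Fin d → ℝ) :
    vecMulVec u (r • v) = r • vecMulVec u v := by
  ext a b
  simp [vecMulVec_apply, mul_comm, mul_left_comm]

lemma sherman {d : ℕ} (A : Matrix (Fin d) (Fin d) ℝ) (hAinv : A * A⁻¹ = 1)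
    (hsym : A⁻¹ᵀ = A⁻¹) (u : Fin d → ℝ) (c : ℝ)
    (hs : 1 + c * (u ⬝ᵥ A⁻¹ *ᵥ u) ≠ 0) :
    (A + c • vecMulVec u u)⁻¹ =
      A⁻¹ - (c / (1 + c * (u ⬝ᵥ A⁻¹ *ᵥ u))) • vecMulVec (A⁻¹ *ᵥ u) (A⁻¹ *ᵥ u) := by
  set w := A⁻¹ *ᵥ u with hw
  set L := u ⬝ᵥ w with hL
  set s := 1 + c * L with hsdef
  apply inv_eq_right_inv
  have hAw : A *ᵥ w = u := by
    rw [hw, mulVec_mulVec, hAinv, one_mulVec]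
  have hvm : u ᵥ* A⁻¹ = w := by
    nth_rewrite 1 [← hsym]
    rw [vecMul_transpose, hw]
  have h2 : A * ((c/s) • vecMulVec w w) = (c/s) • vecMulVec u w := by
    rw [Matrix.mul_smul, mul_vecMulVec', hAw]
  have h3 : (c • vecMulVec u u) * A⁻¹ = c • vecMulVec u w := by
    rw [Matrix.smul_mul, vecMulVec_mul', hvm]
  have h4 : (c • vecMulVec u u) * ((c/s) • vecMulVec w w)
      = (c * (c/s) * L) • vecMulVec u w := by
    rw [Matrix.smul_mul, Matrix.mul_smul, vecMulVec_mul', vecMul_vecMulVec',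
      vecMulVec_smul', smul_smul, smul_smul, hL]
  have hc : c = c/s + c * (c/s) * L := by
    field_simp
    ring
  rw [mul_sub, add_mul, add_mul, hAinv, h2, h3, h4]
  nth_rewrite 1 [hc]
  rw [add_smul]
  abel

lemma quadform {d : ℕ} (A : Matrix (Fin d) (Fin d) ℝ) (hAinv : A * A⁻¹ = 1)
    (hsym : A⁻¹ᵀ = A⁻¹) (u : Fin d → ℝ) (c : ℝ)
    (hs : 1 + c * (u ⬝ᵥ A⁻¹ *ᵥ u) ≠ 0) (v : Fin d → ℝ) :
    v ⬝ᵥ ((A + c • vecMulVec u u)⁻¹ *ᵥ v)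
      = v ⬝ᵥ (A⁻¹ *ᵥ v)
        - (c / (1 + c * (u ⬝ᵥ A⁻¹ *ᵥ u))) * (v ⬝ᵥ (A⁻¹ *ᵥ u))^2 := by
  rw [sherman A hAinv hsym u c hs, sub_mulVec, dotProduct_sub,
    smul_mulVec, vecMulVec_mulVec', dotProduct_smul, smul_eq_mul,
    dotProduct_smul, smul_eq_mul, dotProduct_comm (A⁻¹ *ᵥ u) v]
  ring

theorem leverage_score_monotone_under_row_scaling
    {n d : ℕ} (X : Matrix (Fin n) (Fin d) ℝ) (hX : X.rank = d)
    (α : ℝ) (i : Fin n)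
    (Y : Matrix (Fin n) (Fin d) ℝ)
    (hY : Y = Matrix.diagonal (fun j : Fin n => if j = i then α else 1) * X) :
    (1 ≤ α →
      X i ⬝ᵥ ((Xᵀ * X)⁻¹ *ᵥ X i) ≤ Y i ⬝ᵥ ((Yᵀ * Y)⁻¹ *ᵥ Y i) ∧
      ∀ j : Fin n, j ≠ i →
        Y j ⬝ᵥ ((Yᵀ * Y)⁻¹ *ᵥ Y j) ≤ X j ⬝ᵥ ((Xᵀ * X)⁻¹ *ᵥ X j)) ∧
    (0 < α → α ≤ 1 →
      Y i ⬝ᵥ ((Yᵀ * Y)⁻¹ *ᵥ Y i) ≤ X i ⬝ᵥ ((Xᵀ * X)⁻¹ *ᵥ X i) ∧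
      ∀ j : Fin n, j ≠ i →
        X j ⬝ᵥ ((Xᵀ * X)⁻¹ *ᵥ X j) ≤ Y j ⬝ᵥ ((Yᵀ * Y)⁻¹ *ᵥ Y j)) := by
  -- positive definiteness of the Gram matrix
  have hPD : (Xᵀ * X).PosDef := by
    have hinj : Function.Injective X.mulVecLin := by
      rw [← LinearMap.ker_eq_bot, ← Submodule.finrank_eq_zero (R := ℝ)]
      have hrn := X.mulVecLin.finrank_range_add_finrank_ker
      rw [show Module.finrank ℝ ↥(LinearMap.range X.mulVecLin) = d from hX,
        Module.finrank_pi ℝ] at hrn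
      simpa using hrn
    refine PosDef.of_dotProduct_mulVec_pos (by have := isHermitian_conjTranspose_mul_self X; rwa [conjTranspose_eq_transpose_of_trivial] at this) fun x hx => ?_
    have h1 : star x ⬝ᵥ ((Xᵀ * X) *ᵥ x) = (X *ᵥ x) ⬝ᵥ (X *ᵥ x) := by
      rw [← mulVec_mulVec, dotProduct_mulVec, star_trivial, vecMul_transpose]
    rw [h1]
    have h2 : X *ᵥ x ≠ 0 := by
      intro h0
      apply hx
      have := hinj (a₁ := x) (a₂ := 0) (by simpa using h0)
      simpa using this
    have h3 : (X *ᵥ x) ⬝ᵥ (X *ᵥ x) ≠ 0 := fun h => h2 (dotProduct_self_eq_zero.mp h)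
    exact lt_of_le_of_ne (Finset.sum_nonneg fun k _ => mul_self_nonneg _) (Ne.symm h3)
  set A := Xᵀ * X with hA
  have hdet : IsUnit A.det := hPD.det_pos.ne'.isUnit
  have hAinv : A * A⁻¹ = 1 := mul_nonsing_inv _ hdet
  have hsymA : Aᵀ = A := hPD.1.eq
  have hsym : A⁻¹ᵀ = A⁻¹ := by rw [transpose_nonsing_inv, hsymA]
  have hPDi : A⁻¹.PosDef := hPD.inv
  set u := X i with hu
  set w := A⁻¹ *ᵥ u with hw
  set L := u ⬝ᵥ w with hL
  set c := α^2 - 1 with hc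
  -- 0 ≤ L
  have hL0 : 0 ≤ L := by
    have := hPDi.posSemidef.dotProduct_mulVec_nonneg u
    simpa [hL, hw] using this
  -- L ≤ 1
  have hAw : A *ᵥ w = u := by rw [hw, mulVec_mulVec, hAinv, one_mulVec]
  have hL1 : L ≤ 1 := by
    set v : Fin n → ℝ := X *ᵥ w with hv
    have hvi : v i = L := by
      rw [hv, hL, hu]; rfl
    have hvv : v ⬝ᵥ v = L := by
      rw [hv, dotProduct_mulVec, ← mulVec_transpose, mulVec_mulVec, ← hA, hAw, hL]
    have hsq : L^2 ≤ L := by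
      have h1 : v i * v i ≤ ∑ k, v k * v k :=
        Finset.single_le_sum (f := fun k => v k * v k)
          (fun k _ => mul_self_nonneg _) (Finset.mem_univ i)
      calc L^2 = v i * v i := by rw [hvi]; ring
        _ ≤ ∑ k, v k * v k := h1
        _ = v ⬝ᵥ v := rfl
        _ = L := hvv
    nlinarith
  -- structure of YᵀY
  have hYtY : Yᵀ * Y = A + c • vecMulVec u u := by
    subst hY
    ext a b
    have hentry : ∀ k, ((if k = i then α else 1) * X k a) * ((if k = i then α else 1) * X k b)
        = X k a * X k b + (if k = i then c * (X i a * X i b) else 0) := by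
      intro k
      by_cases hk : k = i <;> simp [hk, hc] <;> ring
    conv_lhs => rw [mul_apply]
    simp only [transpose_apply, diagonal_mul, Matrix.add_apply, Matrix.smul_apply,
      vecMulVec_apply, smul_eq_mul]
    rw [Finset.sum_congr rfl (fun k _ => hentry k), Finset.sum_add_distrib,
      Finset.sum_ite_eq' Finset.univ i (fun _ => c * (X i a * X i b))]
    simp [hA, mul_apply, hu]
  have hYi : Y i = α • u := by
    subst hY
    funext a
    simp [diagonal_mul, hu]
  have hYj : ∀ j : Fin n, j ≠ i → Y j = X j := by
    intro j hj
    subst hY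
    funext a
    simp [diagonal_mul, hj]
  -- main inequalities: a generic helper given s > 0 and sign of c
  have main : ∀ hs : (0:ℝ) < 1 + c * L,
      (Y i ⬝ᵥ ((Yᵀ * Y)⁻¹ *ᵥ Y i) - X i ⬝ᵥ ((Xᵀ * X)⁻¹ *ᵥ X i)
        = c * L * (1 - L) / (1 + c * L)) ∧
      ∀ j : Fin n, j ≠ i →
        X j ⬝ᵥ ((Xᵀ * X)⁻¹ *ᵥ X j) - Y j ⬝ᵥ ((Yᵀ * Y)⁻¹ *ᵥ Y j)
          = c / (1 + c * L) * (X j ⬝ᵥ w)^2 := by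
    intro hs
    have hs' : 1 + c * (u ⬝ᵥ A⁻¹ *ᵥ u) ≠ 0 := by rw [← hw, ← hL]; exact hs.ne'
    constructor
    · rw [hYi, hYtY, quadform A hAinv hsym u c hs']
      rw [mulVec_smul, dotProduct_smul, smul_dotProduct, ← hw, ← hL]
      field_simp
      ring
    · intro j hj
      rw [hYj j hj, hYtY, quadform A hAinv hsym u c hs', ← hw, ← hL]
      ring
  constructor
  · intro hα
    have hc0 : 0 ≤ c := by rw [hc]; nlinarith
    have hs : (0:ℝ) < 1 + c * L := by nlinarith
    obtain ⟨e1, e2⟩ := main hs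
    constructor
    · have hr : 0 ≤ c * L * (1 - L) / (1 + c * L) :=
        div_nonneg (mul_nonneg (mul_nonneg hc0 hL0) (by linarith)) hs.le
      linarith [e1]
    · intro j hj
      have he := e2 j hj
      have hr : 0 ≤ c / (1 + c * L) * (X j ⬝ᵥ w)^2 :=
        mul_nonneg (div_nonneg hc0 hs.le) (sq_nonneg _)
      linarith [he]
  · intro hα0 hα1
    have hc0 : c ≤ 0 := by rw [hc]; nlinarith
    have hcl : c ≤ c * L := by nlinarith [mul_nonneg (neg_nonneg.mpr hc0) (by linarith : (0:ℝ) ≤ 1 - L)]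
    have hα2 : (0:ℝ) < α^2 := by positivity
    have hs : (0:ℝ) < 1 + c * L := by rw [hc] at *; linarith
    obtain ⟨e1, e2⟩ := main hs
    constructor
    · have hnum : c * L * (1 - L) ≤ 0 :=
        mul_nonpos_of_nonpos_of_nonneg (mul_nonpos_of_nonpos_of_nonneg hc0 hL0) (by linarith)
      have hr : c * L * (1 - L) / (1 + c * L) ≤ 0 :=
        div_nonpos_iff.mpr (Or.inr ⟨hnum, hs.le⟩)
      linarith [e1]
    · intro j hj
      have he := e2 j hj
      have hr : c / (1 + c * L) * (X j ⬝ᵥ w)^2 ≤ 0 :=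
        mul_nonpos_of_nonpos_of_nonneg (div_nonpos_iff.mpr (Or.inr ⟨hc0, hs.le⟩)) (sq_nonneg _)
      linarith [he]
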